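/- Let K be a field of characteristic 0, let n ∈ {3, 4, 6}, let E be an elliptic curve over K, and let C be a subgroup of E(\bar{K}) cyclic of order n that is mapped to itself by every σ ∈ Gal(\bar{K}/K). Then C is pointwise defined over an extension F of K of degree at most 2, i.e. there is a field F with K ⊆ F ⊆ \bar{K}, [F:K] ≤ 2, such that every point of C lies in the image of E(F) in E(\bar{K}). -/

import Mathlib

open WeierstrassCurve IntermediateField Module

open scoped Classical

/-- `E(K)` contains a subgroup isomorphic to `T`. -/
def WeierstrassCurve.ContainsTorsion {K : Type*} [Field K] (E : WeierstrassCurve K)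
    (T : Type) [AddCommGroup T] : Prop :=
  ∃ φ : T →+ E.toAffine.Point, Function.Injective φ

/-- The set of `j`-invariants of elliptic curves over `K` whose Mordell-Weil group contains
a subgroup isomorphic to `T`. -/
noncomputable def torsionJSet (K : Type*) [Field K] (T : Type) [AddCommGroup T] : Set K :=
  {j | ∃ (E : WeierstrassCurve K) (hE : E.IsElliptic),
    @WeierstrassCurve.j K _ E hE = j ∧ E.ContainsTorsion T}

/-- `E` has an `n`-isogeny over `K`: a Galois-stable cyclic subgroup of order `n`
of the points of `E` over an algebraic closure of `K`. -/
def WeierstrassCurve.HasDegIsogeny {K : Type*} [Field K] (E : WeierstrassCurve K) (n : ℕ) :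
    Prop :=
  ∃ C : AddSubgroup (E.baseChange (AlgebraicClosure K)).toAffine.Point,
    Nonempty (C ≃+ ZMod n) ∧
    ∀ (σ : AlgebraicClosure K ≃ₐ[K] AlgebraicClosure K), ∀ P ∈ C,
      WeierstrassCurve.Affine.Point.map (W' := E.toAffine) σ.toAlgHom P ∈ C

/-- The set of `j`-invariants of elliptic curves over `K` admitting an `n`-isogeny. -/
noncomputable def isogenyJSet (K : Type*) [Field K] (n : ℕ) : Set K :=
  {j | ∃ (E : WeierstrassCurve K) (hE : E.IsElliptic),
    @WeierstrassCurve.j K _ E hE = j ∧ E.HasDegIsogeny n}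

/-- The set of `j`-invariants of elliptic curves over `K` having a point of order `n`. -/
noncomputable def pointOrderJSet (K : Type*) [Field K] (n : ℕ) : Set K :=
  {j | ∃ (E : WeierstrassCurve K) (hE : E.IsElliptic),
    @WeierstrassCurve.j K _ E hE = j ∧ ∃ P : E.toAffine.Point, addOrderOf P = n}

/-- The short Weierstrass curve `y² = x³ + ax + b`. -/
def shortW (K : Type*) [Field K] (a b : K) : WeierstrassCurve K :=
  { a₁ := 0, a₂ := 0, a₃ := 0, a₄ := a, a₆ := b }

/-!
Let `g` generate `C`. A Galois automorphism `σ` maps `g` to another point of order `n` in `C`,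
and since `(ZMod n)ˣ = {±1}` for `n ∈ {3, 4, 6}`, `σ g = ±g`. Negation does not change the
`x`-coordinate, so `x(g)` is Galois-invariant and lies in `K` (as `K` is perfect). Then `y(g)` is
a root of the Weierstrass equation with `x = x(g)`, a monic quadratic over `K`, so `F = K(y(g))`
has degree at most 2 over `K`, contains both coordinates of `g`, and hence all of `C = ⟨g⟩`.
-/

theorem ZMod.eq_one_or_neg_one_of_addOrderOf_eq {n : ℕ} (hn : n = 3 ∨ n = 4 ∨ n = 6)
    {a : ZMod n} (ha : addOrderOf a = n) : a = 1 ∨ a = -1 := by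
  have : NeZero n := ⟨by omega⟩
  obtain ⟨u, rfl⟩ : IsUnit a := by
    rw [← ZMod.natCast_zmod_val a, ZMod.isUnit_iff_coprime]
    rw [← ZMod.natCast_zmod_val a, ZMod.addOrderOf_coe _ (NeZero.ne n), Nat.div_eq_self] at ha
    exact Nat.coprime_comm.mp (ha.resolve_left (NeZero.ne n))
  have units_eq : ∀ u : (ZMod n)ˣ, (u : ZMod n) = 1 ∨ (u : ZMod n) = -1 := by
    rcases hn with rfl | rfl | rfl <;> decide
  exact units_eq u

namespace AddSubgroup

variable {G : Type*} [AddGroup G] {C : AddSubgroup G} {n : ℕ}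

theorem le_zmultiples_of_addEquiv_zmod [NeZero n] (e : C ≃+ ZMod n) :
    C ≤ zmultiples (e.symm 1 : G) := by
  intro P hP
  refine ⟨(e ⟨P, hP⟩).val, ?_⟩
  change ((e ⟨P, hP⟩).val : ℤ) • (e.symm 1 : G) = P
  rw [natCast_zsmul, ← coe_nsmul, ← map_nsmul, nsmul_one, ZMod.natCast_zmod_val,
    AddEquiv.symm_apply_apply]

theorem eq_or_eq_neg_of_addOrderOf_eq (hn : n = 3 ∨ n = 4 ∨ n = 6) (e : C ≃+ ZMod n)
    {P : G} (hP : P ∈ C) (hord : addOrderOf P = n) :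
    P = e.symm 1 ∨ P = -(e.symm 1 : G) := by
  have hord' : addOrderOf (e ⟨P, hP⟩) = n := by
    rwa [AddEquiv.addOrderOf_eq, ← AddSubgroup.addOrderOf_coe]
  rcases ZMod.eq_one_or_neg_one_of_addOrderOf_eq hn hord' with h | h <;> [left; right] <;>
    simpa using congrArg (fun a ↦ (e.symm a : G)) h

end AddSubgroup

theorem IntermediateField.finrank_adjoin_simple_le_natDegree {K L : Type*} [Field K] [Field L]
    [Algebra K L] {y : L} {p : Polynomial K} (hp : p.Monic) (hy : Polynomial.aeval y p = 0) :
    finrank K K⟮y⟯ ≤ p.natDegree := by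
  rw [adjoin.finrank ⟨p, hp, hy⟩]
  exact Polynomial.natDegree_le_natDegree (minpoly.min K y hp hy)

namespace WeierstrassCurve

open Polynomial

variable {K L : Type*} [Field K] [Field L] [Algebra K L] (E : WeierstrassCurve K)

noncomputable def fiberPolynomial (x₀ : K) : K[X] :=
  X ^ 2 + C (E.a₁ * x₀ + E.a₃) * X - C (x₀ ^ 3 + E.a₂ * x₀ ^ 2 + E.a₄ * x₀ + E.a₆)

theorem monic_fiberPolynomial (x₀ : K) : (E.fiberPolynomial x₀).Monic := by
  unfold fiberPolynomial; monicity!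

theorem natDegree_fiberPolynomial_le (x₀ : K) : (E.fiberPolynomial x₀).natDegree ≤ 2 := by
  unfold fiberPolynomial; compute_degree

theorem aeval_fiberPolynomial {x₀ : K} {y : L}
    (h : (E.baseChange L).toAffine.Equation (algebraMap K L x₀) y) :
    aeval y (E.fiberPolynomial x₀) = 0 := by
  rw [Affine.equation_iff] at h
  simp only [fiberPolynomial, map_sub, map_add, map_pow, map_mul, aeval_X, aeval_C] at h ⊢
  simp only [baseChange, map_a₁, map_a₂, map_a₃, map_a₄, map_a₆] at h
  linear_combination h

theorem Affine.Point.exists_eq_some_of_ne_zero {R : Type*} [CommRing R] {W : Affine R}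
    {P : W.Point} (hP : P ≠ 0) : ∃ x y h, P = .some x y h := by
  cases P with
  | zero => exact absurd rfl hP
  | @some x y h => exact ⟨x, y, h, rfl⟩

theorem Affine.Point.map_x_eq_of_map_some_eq_or_eq_neg {x y : L}
    (h : (E.baseChange L).toAffine.Nonsingular x y) (f : L →ₐ[K] L)
    (hf : Point.map (W' := E.toAffine) f (.some x y h) = .some x y h ∨
      Point.map (W' := E.toAffine) f (.some x y h) = -.some x y h) : f x = x := by
  rcases hf with hf | hf
  · rw [Point.map_some] at hf
    exact (Point.some.inj hf).1
  · rw [Point.neg_some, Point.map_some] at hf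
    exact (Point.some.inj hf).1

theorem Affine.Point.some_mem_range_map_val (F : IntermediateField K L) {x y : L}
    (h : (E.baseChange L).toAffine.Nonsingular x y) (hx : x ∈ F) (hy : y ∈ F) :
    Point.some x y h ∈ Set.range (Point.map (W' := E.toAffine) F.val) :=
  ⟨.some (⟨x, hx⟩ : F) ⟨y, hy⟩ ((baseChange_nonsingular (W := E) F.val.injective _ _).mp h),
    Point.map_some _ _⟩

end WeierstrassCurve

theorem cyclic_subgroup_defined_over_quadratic_general (K : Type*) [Field K] [CharZero K]
    (n : ℕ) (hn : n ∈ ({3, 4, 6} : Set ℕ)) (E : WeierstrassCurve K)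
    (C : AddSubgroup (E.baseChange (AlgebraicClosure K)).toAffine.Point)
    (hC : Nonempty (C ≃+ ZMod n))
    (hGal : ∀ (σ : AlgebraicClosure K ≃ₐ[K] AlgebraicClosure K), ∀ P ∈ C,
      WeierstrassCurve.Affine.Point.map (W' := E.toAffine) σ.toAlgHom P ∈ C) :
    ∃ F : IntermediateField K (AlgebraicClosure K), FiniteDimensional K F ∧
      Module.finrank K F ≤ 2 ∧
      ∀ P ∈ C, P ∈ Set.range (WeierstrassCurve.Affine.Point.map (W' := E.toAffine) F.val) := by
  obtain ⟨e⟩ := hC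
  replace hn : n = 3 ∨ n = 4 ∨ n = 6 := by simpa using hn
  have : NeZero n := ⟨by omega⟩
  set g := (e.symm 1 : (E.baseChange (AlgebraicClosure K)).toAffine.Point)
  have hg_ord : addOrderOf g = n := by
    rw [AddSubgroup.addOrderOf_coe, AddEquiv.addOrderOf_eq, ZMod.addOrderOf_one]
  have hσg (σ : AlgebraicClosure K ≃ₐ[K] AlgebraicClosure K) :
      Affine.Point.map (W' := E.toAffine) σ.toAlgHom g = g ∨
        Affine.Point.map (W' := E.toAffine) σ.toAlgHom g = -g :=
    AddSubgroup.eq_or_eq_neg_of_addOrderOf_eq hn e (hGal σ g (e.symm 1).2)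
      (by rw [addOrderOf_injective _ (Affine.Point.map_injective _), hg_ord])
  obtain ⟨x, y, h, hg⟩ := Affine.Point.exists_eq_some_of_ne_zero (P := g) fun h0 ↦ by
    rw [h0, addOrderOf_zero] at hg_ord
    omega
  obtain ⟨x₀, rfl⟩ : x ∈ Set.range (algebraMap K (AlgebraicClosure K)) :=
    IntermediateField.mem_bot.mp <| (InfiniteGalois.mem_bot_iff_fixed x).mpr fun σ ↦
      Affine.Point.map_x_eq_of_map_some_eq_or_eq_neg E h σ.toAlgHom (hg ▸ hσg σ)
  have hy := E.aeval_fiberPolynomial h.1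
  refine ⟨K⟮y⟯, IntermediateField.adjoin.finiteDimensional ⟨_, E.monic_fiberPolynomial x₀, hy⟩,
    (IntermediateField.finrank_adjoin_simple_le_natDegree (E.monic_fiberPolynomial x₀) hy).trans
      (E.natDegree_fiberPolynomial_le x₀), fun P hP ↦ ?_⟩
  have hgF : g ∈ (Affine.Point.map (W' := E.toAffine) K⟮y⟯.val).range := hg ▸
    Affine.Point.some_mem_range_map_val E _ h (IntermediateField.algebraMap_mem _ _)
      (IntermediateField.mem_adjoin_simple_self K y)
  exact AddSubgroup.zmultiples_le.mpr hgF (AddSubgroup.le_zmultiples_of_addEquiv_zmod e hP)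

/-- Over a field `K` of characteristic 0, a Galois-stable cyclic subgroup
of order `n ∈ {3, 4, 6}` of the points of an elliptic curve `E` over an algebraic closure of
`K` is pointwise defined over an extension of `K` of degree at most 2. -/
theorem cyclic_subgroup_defined_over_quadratic (K : Type*) [Field K] [CharZero K]
    (n : ℕ) (hn : n ∈ ({3, 4, 6} : Set ℕ)) (E : WeierstrassCurve K) (hE : E.Δ ≠ 0)
    (C : AddSubgroup (E.baseChange (AlgebraicClosure K)).toAffine.Point)
    (hC : Nonempty (C ≃+ ZMod n))
    (hGal : ∀ (σ : AlgebraicClosure K ≃ₐ[K] AlgebraicClosure K), ∀ P ∈ C,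
      WeierstrassCurve.Affine.Point.map (W' := E.toAffine) σ.toAlgHom P ∈ C) :
    ∃ F : IntermediateField K (AlgebraicClosure K), FiniteDimensional K F ∧
      Module.finrank K F ≤ 2 ∧
      ∀ P ∈ C, P ∈ Set.range (WeierstrassCurve.Affine.Point.map (W' := E.toAffine) F.val) :=
  cyclic_subgroup_defined_over_quadratic_general K n hn E C hC hGal
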